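/- arXiv:1201.6315 — 4 statements merged into one kernel-verified Lean document; each statement's English description precedes it below -/
import Mathlib

section
/- Let D be a compact convex polytope in R^n with vertex set D0, and let U ⊆ R^n be a convex set. For every point x ∈ D \ U there exists a vertex v ∈ D0 such that the closed segment [v, x] does not intersect U. -/
/-- For every point of a compact convex polytope `D = conv D0` outside a convex set `U`,
there is a vertex `v ∈ D0` such that the segment `[v, x]` avoids `U`. -/
theorem stmt_0 {n : ℕ} (D0 : Finset (Fin n → ℝ)) (U : Set (Fin n → ℝ))
    (hU : Convex ℝ U) (x : Fin n → ℝ)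
    (hxD : x ∈ convexHull ℝ (D0 : Set (Fin n → ℝ))) (hxU : x ∉ U) :
    ∃ v ∈ D0, segment ℝ v x ∩ U = ∅ := by
  by_contra hcon
  push_neg at hcon
  have h' : ∀ v ∈ D0, ∃ p q : ℝ, 0 ≤ p ∧ 0 ≤ q ∧ p + q = 1 ∧ p • v + q • x ∈ U := by
    intro v hv
    obtain ⟨y, hyseg, hyU⟩ := hcon v hv
    obtain ⟨a, b, ha, hb, hab, rfl⟩ := hyseg
    exact ⟨a, b, ha, hb, hab, hyU⟩
  choose! p q hp hq hpq hmem using h'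
  have hppos : ∀ v ∈ D0, 0 < p v := by
    intro v hv
    rcases (hp v hv).lt_or_eq with h1 | h1
    · exact h1
    · exfalso
      have hq1 : q v = 1 := by have := hpq v hv; linarith
      apply hxU
      have := hmem v hv
      rw [← h1, hq1] at this
      simpa using this
  rw [Finset.convexHull_eq] at hxD
  obtain ⟨w, hw0, hw1, hwx⟩ := hxD
  have hwx' : ∑ v ∈ D0, w v • v = x := by
    rw [← hwx, Finset.centerMass, hw1]
    simp
  set c := ∑ v ∈ D0, w v * (q v / p v) with hc
  have hc0 : 0 ≤ c := by
    apply Finset.sum_nonneg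
    intro v hv
    exact mul_nonneg (hw0 v hv) (div_nonneg (hq v hv) (hp v hv))
  have hμsum : ∑ v ∈ D0, w v / p v = 1 + c := by
    rw [← hw1, hc, ← Finset.sum_add_distrib]
    apply Finset.sum_congr rfl
    intro v hv
    have hp' : (p v) ≠ 0 := (hppos v hv).ne'
    have h2 : w v / p v = w v * (p v + q v) / p v := by rw [hpq v hv, mul_one]
    rw [h2]
    field_simp
  have hsum : ∑ v ∈ D0, (w v / p v) • (p v • v + q v • x) = (1 + c) • x := by
    have key : ∀ v ∈ D0, (w v / p v) • (p v • v + q v • x)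
        = w v • v + (w v * (q v / p v)) • x := by
      intro v hv
      have hp' : (p v) ≠ 0 := (hppos v hv).ne'
      rw [smul_add, smul_smul, smul_smul, div_mul_cancel₀ _ hp']
      congr 1
      congr 1
      field_simp
    rw [Finset.sum_congr rfl key, Finset.sum_add_distrib, hwx', ← Finset.sum_smul, ← hc,
      add_smul, one_smul]
  have hpos : (0:ℝ) < 1 + c := by linarith
  have hxmem : D0.centerMass (fun v => w v / p v) (fun v => p v • v + q v • x) ∈ U :=
    hU.centerMass_mem (fun v hv => div_nonneg (hw0 v hv) (hppos v hv).le)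
      (hμsum ▸ hpos) (fun v hv => hmem v hv)
  apply hxU
  rwa [Finset.centerMass, hμsum, hsum, smul_smul, inv_mul_cancel₀ hpos.ne', one_smul] at hxmem
end

section
/- Let D be a compact convex polytope in R^n, U ⊆ R^n a convex set, and suppose x = Σ_v κ_v v is a convex combination of the vertices v of D with κ_v ≥ 0, Σ κ_v = 1. If for every vertex v there exists λ_v ∈ (0,1] with x + λ_v (v − x) ∈ U, then x ∈ U. -/
/-!
If `l i > 0` and `x + l i • (p i - x)` are points of `U`, reweighting the convex combination
`x = ∑ κ i • p i` by `κ i / l i` exhibits `x` as their centre of mass: the weights `κ i / l i`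
undo the shrinking by `l i`, and `∑ κ i • (p i - x) = 0`.
-/

open Finset

section

variable {ι R E : Type*} [Field R] [AddCommGroup E] [Module R E]

theorem Finset.centerMass_div_add_smul_sub_eq {s : Finset ι} {κ l : ι → R} {p : ι → E} {x : E}
    (hl : ∀ i ∈ s, l i ≠ 0) (hbal : ∑ i ∈ s, κ i • (p i - x) = 0)
    (hw : ∑ i ∈ s, κ i / l i ≠ 0) :
    s.centerMass (fun i ↦ κ i / l i) (fun i ↦ x + l i • (p i - x)) = x := by
  have hsum : ∑ i ∈ s, (κ i / l i) • (x + l i • (p i - x))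
      = (∑ i ∈ s, κ i / l i) • x + ∑ i ∈ s, κ i • (p i - x) := by
    rw [sum_smul, ← sum_add_distrib]
    refine sum_congr rfl fun i hi ↦ ?_
    rw [smul_add, smul_smul, div_mul_cancel₀ _ (hl i hi)]
  rw [centerMass, hsum, hbal, add_zero, inv_smul_smul₀ hw]

variable [LinearOrder R] [IsStrictOrderedRing R]

theorem Convex.mem_of_forall_add_smul_sub_mem {U : Set E} (hU : Convex R U) {s : Finset ι}
    {κ : ι → R} {p : ι → E} {x : E} (hκ : ∀ i ∈ s, 0 ≤ κ i) (hκsum : ∑ i ∈ s, κ i = 1)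
    (hx : x = ∑ i ∈ s, κ i • p i) (h : ∀ i ∈ s, ∃ l : R, 0 < l ∧ x + l • (p i - x) ∈ U) :
    x ∈ U := by
  choose! l hl hmem using h
  have hbal : ∑ i ∈ s, κ i • (p i - x) = 0 := by
    simp only [smul_sub, sum_sub_distrib, ← sum_smul, hκsum, one_smul, ← hx, sub_self]
  obtain ⟨j, hj, hκj⟩ : ∃ j ∈ s, 0 < κ j :=
    exists_lt_of_sum_lt (by simp [hκsum] : ∑ i ∈ s, (0 : R) < ∑ i ∈ s, κ i)
  have hw : 0 < ∑ i ∈ s, κ i / l i :=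
    sum_pos' (fun i hi ↦ div_nonneg (hκ i hi) (hl i hi).le) ⟨j, hj, div_pos hκj (hl j hj)⟩
  rw [← centerMass_div_add_smul_sub_eq (fun i hi ↦ (hl i hi).ne') hbal hw.ne']
  exact hU.centerMass_mem (fun i hi ↦ div_nonneg (hκ i hi) (hl i hi).le) hw hmem

end

/-- If `x` is a convex combination of the vertices of a polytope, and for every
vertex `v` there is `λ_v ∈ (0,1]` with `x + λ_v (v - x) ∈ U` for a convex `U`,
then `x ∈ U`. -/
theorem stmt_1 {n : ℕ} (D0 : Finset (Fin n → ℝ)) (U : Set (Fin n → ℝ))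
    (hU : Convex ℝ U) (κ : (Fin n → ℝ) → ℝ) (x : Fin n → ℝ)
    (hκ : ∀ v ∈ D0, 0 ≤ κ v) (hsum : ∑ v ∈ D0, κ v = 1)
    (hx : x = ∑ v ∈ D0, κ v • v)
    (h : ∀ v ∈ D0, ∃ l ∈ Set.Ioc (0 : ℝ) 1, x + l • (v - x) ∈ U) :
    x ∈ U :=
  hU.mem_of_forall_add_smul_sub_mem (p := id) hκ hsum hx fun v hv ↦
    let ⟨l, hl, hmem⟩ := h v hv
    ⟨l, hl.1, hmem⟩
end

section
/- Let D ⊆ R^n be convex, U ⊆ D a convex subset, and let W_1, …, W_q be the path-connected components of D \ U. Then for any index set I ⊆ {1, …, q}, the set K_I = U ∪ (⋃_{i∈I} W_i) is convex. -/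
/-!
If `z ∈ [x, y]` lies outside the convex set `U`, then `U` cannot meet both `[x, z]` and `[z, y]`:
points `v ∈ [x, z] ∩ U` and `w ∈ [z, y] ∩ U` would give `z ∈ [v, w] ⊆ U`. So one of the two halves,
say `[z, y]`, runs inside `D \ U`; then `y ∉ U`, hence `y` lies in some component `W i`, and the
half-segment joins `z` to `y` inside `D \ U`, putting `z` in the same component.
-/

open Set

theorem Convex.disjoint_segment_left_or_right {E : Type*} [AddCommGroup E] [Module ℝ E]
    {U : Set E} (hU : Convex ℝ U) {x y z : E} (hz : z ∈ segment ℝ x y) (hzU : z ∉ U) :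
    Disjoint (segment ℝ x z) U ∨ Disjoint (segment ℝ z y) U := by
  by_contra! h
  obtain ⟨⟨v, hv, hvU⟩, ⟨w, hw, hwU⟩⟩ := And.imp not_disjoint_iff.1 not_disjoint_iff.1 h
  rw [mem_segment_iff_wbtw] at hz hv hw
  exact hzU (hU.segment_subset hvU hwU ((hz.trans_right_left hw).trans_left_right hv).mem_segment)

theorem mem_iUnion_pathComponentIn_of_joinedIn {X ι : Type*} [TopologicalSpace X] {S : Set X}
    {W : ι → Set X} (hW : ∀ i, ∃ x, W i = pathComponentIn S x) {y z : X}
    (hy : y ∈ ⋃ i, W i) (hyz : JoinedIn S y z) : z ∈ ⋃ i, W i := by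
  obtain ⟨i, hi⟩ := mem_iUnion.1 hy
  obtain ⟨x, hx⟩ := hW i
  rw [hx] at hi
  exact mem_iUnion.2 ⟨i, hx ▸ hi.trans hyz⟩

/-- The union of a convex set `U ⊆ D` with any family of path-connected components
of `D \ U` is convex. -/
theorem stmt_2 {n : ℕ} (D U : Set (Fin n → ℝ))
    (hD : Convex ℝ D) (hU : Convex ℝ U) (hUD : U ⊆ D)
    {ι : Type} (W : ι → Set (Fin n → ℝ))
    (hW : ∀ i, ∃ x ∈ D \ U, W i = pathComponentIn (D \ U) x) :
    Convex ℝ (U ∪ ⋃ i, W i) := by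
  have hWD : ∀ i, W i ⊆ D := fun i ↦ by
    obtain ⟨x, -, hx⟩ := hW i
    exact hx ▸ pathComponentIn_subset.trans sdiff_subset
  have hKD : U ∪ ⋃ i, W i ⊆ D := union_subset hUD (iUnion_subset hWD)
  have of_disjoint : ∀ y ∈ U ∪ ⋃ i, W i, ∀ z ∈ D, Disjoint (segment ℝ z y) U → z ∈ ⋃ i, W i := by
    intro y hy z hz hzy
    have hyW : y ∈ ⋃ i, W i := hy.resolve_left (disjoint_left.1 hzy (right_mem_segment ℝ z y))
    have hsub : segment ℝ z y ⊆ D \ U := subset_sdiff.2 ⟨hD.segment_subset hz (hKD hy), hzy⟩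
    exact mem_iUnion_pathComponentIn_of_joinedIn (fun i ↦ (hW i).imp fun _ ↦ And.right) hyW
      (JoinedIn.of_segment_subset hsub).symm
  refine convex_iff_segment_subset.2 fun x hx y hy z hz ↦ ?_
  by_cases hzU : z ∈ U
  · exact .inl hzU
  have hzD : z ∈ D := hD.segment_subset (hKD hx) (hKD hy) hz
  rcases hU.disjoint_segment_left_or_right hz hzU with hxz | hzy
  · exact .inr (of_disjoint x hx z hzD (segment_symm ℝ z x ▸ hxz))
  · exact .inr (of_disjoint y hy z hzD hzy)
end

section
/- Let D ⊆ R^n be compact convex, G strictly convex continuous on D with minimizer x* and minimum g*, and g > g*. Then the path-connected components of the level set S_g = {x : G(x) = g} are in bijection with the path-connected components of D \ U_g = {x : G(x) ≥ g}: each component σ of S_g is contained in exactly one component W of {G ≥ g}, and each component W of {G ≥ g} contains exactly one component of S_g, namely θ_g(W). -/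
/-!
Every point `x` with `G x ≥ g` lies on the segment from the minimiser `x₀`, along which `G` is
strictly increasing, so the segment crosses the level `g` at exactly one point `θ x`, and
`G ≥ g` on the part of the segment between `θ x` and `x`. Strict monotonicity along the rays
makes the crossing parameter depend continuously on `x`, so `θ` retracts `{G ≥ g}` continuously
onto `{G = g}` while keeping each point in its path component. Paths in `{G ≥ g}` are
therefore pushed by `θ` to paths in `{G = g}`.
-/

open Set AffineMap Filter Topology
open scoped Convex

section StrictConvexOn

variable {𝕜 E β : Type*} [Field 𝕜] [LinearOrder 𝕜] [IsStrictOrderedRing 𝕜]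
  [AddCommGroup E] [Module 𝕜 E] [AddCommMonoid β] [LinearOrder β] [IsOrderedAddMonoid β]
  [Module 𝕜 β] [PosSMulStrictMono 𝕜 β] {s : Set E} {f : E → β} {x y z : E}

theorem StrictConvexOn.lt_of_mem_segment_of_isMinOn (hf : StrictConvexOn 𝕜 s f)
    (hmin : IsMinOn f s x) (hx : x ∈ s) (hy : y ∈ s) (hz : z ∈ [x -[𝕜] y]) (hzy : z ≠ y) :
    f z < f y := by
  have hxy : x ≠ y := by
    rintro rfl
    exact hzy (by simpa using hz)
  have lt_of_mem_openSegment : ∀ w ∈ openSegment 𝕜 x y, f w < f y := fun w hw ↦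
    (lt_max_iff.1 (hf.lt_on_openSegment hx hy hxy hw)).resolve_left
      (isMinOn_iff.1 hmin w (hf.1.openSegment_subset hx hy hw)).not_gt
  by_cases hzx : z = x
  · have hm := midpoint_mem_openSegment (𝕜 := 𝕜) x y
    exact hzx ▸ (isMinOn_iff.1 hmin _ (hf.1.openSegment_subset hx hy hm)).trans_lt
      (lt_of_mem_openSegment _ hm)
  · exact lt_of_mem_openSegment z (mem_openSegment_of_ne_left_right (Ne.symm hzx) (Ne.symm hzy) hz)

theorem StrictConvexOn.strictMonoOn_lineMap_of_isMinOn (hf : StrictConvexOn 𝕜 s f)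
    (hmin : IsMinOn f s x) (hx : x ∈ s) (hy : y ∈ s) (hxy : x ≠ y) :
    StrictMonoOn (fun t ↦ f (lineMap x y t)) (Icc (0 : 𝕜) 1) := by
  rintro a ⟨ha, -⟩ b ⟨-, hb1⟩ hab
  have hb : 0 < b := ha.trans_lt hab
  have hseg : lineMap x y a ∈ [x -[𝕜] lineMap x y b] := by
    simpa [div_mul_cancel₀ a hb.ne'] using
      lineMap_mem_segment 𝕜 x (lineMap x y b) ⟨div_nonneg ha hb.le, div_le_one_of_le₀ hab.le hb.le⟩
  exact hf.lt_of_mem_segment_of_isMinOn hmin hx (hf.1.lineMap_mem hx hy ⟨hb.le, hb1⟩) hseg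
    ((lineMap_injective 𝕜 hxy).ne hab.ne)

end StrictConvexOn

theorem continuousOn_of_strictMonoOn_of_apply_eq {X α β : Type*} [TopologicalSpace X]
    [LinearOrder α] [TopologicalSpace α] [OrderTopology α]
    [LinearOrder β] [TopologicalSpace β] [OrderClosedTopology β]
    {s : Set X} {F : X → α → β} {τ : X → α} {l u : α} {c : β}
    (hF : ∀ t ∈ Icc l u, ContinuousOn (F · t) s) (hmono : ∀ x ∈ s, StrictMonoOn (F x) (Icc l u))
    (hτ : ∀ x ∈ s, τ x ∈ Icc l u) (hτc : ∀ x ∈ s, F x (τ x) = c) :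
    ContinuousOn τ s := by
  intro x₀ hx₀
  refine tendsto_order.2 ⟨fun a ha ↦ ?_, fun b hb ↦ ?_⟩
  · rcases lt_or_ge a l with hal | hla
    · filter_upwards [self_mem_nhdsWithin] with x hx using hal.trans_le (hτ x hx).1
    have haI : a ∈ Icc l u := ⟨hla, ha.le.trans (hτ x₀ hx₀).2⟩
    have hlt : F x₀ a < c := hτc x₀ hx₀ ▸ hmono x₀ hx₀ haI (hτ x₀ hx₀) ha
    filter_upwards [(hF a haI x₀ hx₀).eventually_lt_const hlt, self_mem_nhdsWithin]
      with x hxa hx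
    exact ((hmono x hx).lt_iff_lt haI (hτ x hx)).1 (hτc x hx ▸ hxa)
  · rcases le_or_gt b u with hbu | hub
    swap
    · filter_upwards [self_mem_nhdsWithin] with x hx using (hτ x hx).2.trans_lt hub
    have hbI : b ∈ Icc l u := ⟨(hτ x₀ hx₀).1.trans hb.le, hbu⟩
    have hlt : c < F x₀ b := hτc x₀ hx₀ ▸ hmono x₀ hx₀ (hτ x₀ hx₀) hbI hb
    filter_upwards [(hF b hbI x₀ hx₀).eventually_const_lt hlt, self_mem_nhdsWithin]
      with x hxb hx
    exact ((hmono x hx).lt_iff_lt (hτ x hx) hbI).1 (hτc x hx ▸ hxb)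

section LevelSet

variable {E : Type*} [AddCommGroup E] [Module ℝ E] [TopologicalSpace E]
  [IsTopologicalAddGroup E] [ContinuousSMul ℝ E] {D : Set E} {G : E → ℝ} {x₀ x : E} {g : ℝ}

theorem ContinuousOn.exists_apply_lineMap_eq (hG : ContinuousOn G D) (hD : Convex ℝ D)
    (hx₀ : x₀ ∈ D) (hx : x ∈ D) (hg : g ∈ Icc (G x₀) (G x)) :
    ∃ t : ℝ, t ∈ Icc 0 1 ∧ G (AffineMap.lineMap x₀ x t) = g := by
  have hcont : ContinuousOn (fun t : ℝ ↦ G (AffineMap.lineMap x₀ x t)) (Icc 0 1) :=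
    hG.comp lineMap_continuous.continuousOn fun t ht ↦ hD.lineMap_mem hx₀ hx ht
  simpa using intermediate_value_Icc zero_le_one hcont (by simpa using hg)

theorem StrictConvexOn.exists_retraction_superlevelSet_levelSet (hGc : ContinuousOn G D)
    (hG : StrictConvexOn ℝ D G) (hmin : IsMinOn G D x₀) (hx₀ : x₀ ∈ D) (hg : G x₀ < g) :
    ∃ θ : E → E, ContinuousOn θ {x ∈ D | g ≤ G x} ∧
      MapsTo θ {x ∈ D | g ≤ G x} {x ∈ D | G x = g} ∧ EqOn θ id {x ∈ D | G x = g} ∧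
      ∀ x ∈ {x ∈ D | g ≤ G x}, JoinedIn {x ∈ D | g ≤ G x} x (θ x) := by
  set T := {x ∈ D | g ≤ G x}
  have hmono : ∀ x ∈ T, StrictMonoOn (fun t ↦ G (lineMap x₀ x t)) (Icc (0 : ℝ) 1) := by
    rintro x ⟨hxD, hgx⟩
    refine hG.strictMonoOn_lineMap_of_isMinOn hmin hx₀ hxD ?_
    rintro rfl
    exact hgx.not_gt hg
  choose! τ hτI hτ using fun x (hx : x ∈ T) ↦
    hGc.exists_apply_lineMap_eq hG.1 hx₀ hx.1 ⟨hg.le, hx.2⟩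
  have hτc : ContinuousOn τ T := continuousOn_of_strictMonoOn_of_apply_eq
    (fun t ht ↦ hGc.comp (continuousOn_const.lineMap continuousOn_id continuousOn_const)
      fun x hx ↦ hG.1.lineMap_mem hx₀ hx.1 ht) hmono hτI hτ
  refine ⟨fun x ↦ lineMap x₀ x (τ x), continuousOn_const.lineMap continuousOn_id hτc, fun x hx ↦
     ⟨hG.1.lineMap_mem hx₀ hx.1 (hτI x hx), hτ x hx⟩, fun y hy ↦ ?_, fun x hx ↦ ?_⟩
  · have hyT : y ∈ T := ⟨hy.1, hy.2.ge⟩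
    have hτy : τ y = 1 :=
      (hmono y hyT).injOn (hτI y hyT) ⟨zero_le_one, le_rfl⟩ (by simp [hτ y hyT, hy.2])
    simp [hτy]
  · have hsub : lineMap x₀ x '' Icc (τ x) 1 ⊆ T := by
      rintro _ ⟨t, ⟨hτt, ht1⟩, rfl⟩
      have htI : t ∈ Icc (0 : ℝ) 1 := ⟨(hτI x hx).1.trans hτt, ht1⟩
      exact ⟨hG.1.lineMap_mem hx₀ hx.1 htI,
        hτ x hx ▸ (hmono x hx).monotoneOn (hτI x hx) htI hτt⟩
    have hjoin : JoinedIn (Icc (τ x) 1) 1 (τ x) :=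
      ((convex_Icc _ _).isPathConnected (nonempty_Icc.2 (hτI x hx).2)).joinedIn _
        ⟨(hτI x hx).2, le_rfl⟩ _ ⟨le_rfl, (hτI x hx).2⟩
    simpa using (hjoin.map lineMap_continuous).mono hsub

end LevelSet

theorem stmt_17_general {n : ℕ} (D : Set (Fin n → ℝ)) (G : (Fin n → ℝ) → ℝ)
    (hGcont : ContinuousOn G D) (hG : StrictConvexOn ℝ D G)
    (xstar : Fin n → ℝ) (hxstar : xstar ∈ D) (hmin : ∀ y ∈ D, G xstar ≤ G y)
    (g : ℝ) (hg : G xstar < g) :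
    (∀ y ∈ {x ∈ D | G x = g},
      pathComponentIn {x ∈ D | G x = g} y ⊆ pathComponentIn {x ∈ D | g ≤ G x} y) ∧
    (∀ x ∈ {x ∈ D | g ≤ G x},
      (∃ y ∈ {x ∈ D | G x = g}, y ∈ pathComponentIn {x ∈ D | g ≤ G x} x) ∧
      ∀ y z, y ∈ {x ∈ D | G x = g} → z ∈ {x ∈ D | G x = g} →
        y ∈ pathComponentIn {x ∈ D | g ≤ G x} x →
        z ∈ pathComponentIn {x ∈ D | g ≤ G x} x →
        JoinedIn {x ∈ D | G x = g} y z) := by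
  obtain ⟨θ, hθc, hθS, hθfix, hjoin⟩ :=
    hG.exists_retraction_superlevelSet_levelSet hGcont (isMinOn_iff.2 hmin) hxstar hg
  refine ⟨fun _ _ ↦ pathComponentIn_mono fun x hx ↦ ⟨hx.1, hx.2.ge⟩,
    fun x hx ↦ ⟨⟨θ x, hθS hx, hjoin x hx⟩, fun y z hy hz hxy hxz ↦ ?_⟩⟩
  have hyz : JoinedIn {x ∈ D | g ≤ G x} y z := JoinedIn.trans (JoinedIn.symm hxy) hxz
  simpa [hθfix hy, hθfix hz] using (hyz.map_continuousOn hθc).mono hθS.image_subset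

/-- For `g > g*`, the path-connected components of the level set
`S_g = {x ∈ D | G x = g}` are in bijection with those of `{x ∈ D | G x ≥ g}`:
each component of `S_g` lies in exactly one component of `{G ≥ g}`, and each
component of `{G ≥ g}` contains exactly one component of `S_g`. -/
theorem stmt_17 {n : ℕ} (D : Set (Fin n → ℝ)) (G : (Fin n → ℝ) → ℝ)
    (hDc : IsCompact D) (hD : Convex ℝ D)
    (hGcont : ContinuousOn G D) (hG : StrictConvexOn ℝ D G)
    (xstar : Fin n → ℝ) (hxstar : xstar ∈ D) (hmin : ∀ y ∈ D, G xstar ≤ G y)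
    (g : ℝ) (hg : G xstar < g) :
    (∀ y ∈ {x ∈ D | G x = g},
      pathComponentIn {x ∈ D | G x = g} y ⊆ pathComponentIn {x ∈ D | g ≤ G x} y) ∧
    (∀ x ∈ {x ∈ D | g ≤ G x},
      (∃ y ∈ {x ∈ D | G x = g}, y ∈ pathComponentIn {x ∈ D | g ≤ G x} x) ∧
      ∀ y z, y ∈ {x ∈ D | G x = g} → z ∈ {x ∈ D | G x = g} →
        y ∈ pathComponentIn {x ∈ D | g ≤ G x} x →
        z ∈ pathComponentIn {x ∈ D | g ≤ G x} x →
        JoinedIn {x ∈ D | G x = g} y z) :=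
  stmt_17_general D G hGcont hG xstar hxstar hmin g hg
end
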